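/- arXiv:1503.07971 — 5 statements merged into one kernel-verified Lean document; each statement's English description precedes it below -/
import Mathlib

section
/- The series ∑_{n=0}^∞ ((1/12)_n (5/12)_n)/((1)_n n!) converges and equals 3^{1/4} Γ(1/4)/(2 √π Γ(3/4)); equivalently, ₂F₁(1/12, 5/12; 1; 1) = (3^{1/4}/2) · Ω_{-4}/π, where Ω_{-4} = √π Γ(1/4)/Γ(3/4). -/
/-!
Two classical facts combine. Gauss's summation theorem
`₂F₁(a, b; c; 1) = Γ(c) Γ(c - a - b) / (Γ(c - a) Γ(c - b))` follows from Euler's integral: expanding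
`(1 - t)^(-a)` by the binomial series inside the beta integral `∫₀¹ t^(b-1) (1-t)^(c-a-b-1) dt` and
integrating termwise, which is legitimate because for `a ≥ 0` all terms are nonnegative. With
`a = 1/12`, `b = 5/12`, `c = 1` this gives `√π / (Γ(11/12) Γ(7/12))`. By reflection
`Γ(1/12) Γ(5/12) Γ(7/12) Γ(11/12) = 4π²`, while Gauss's triplication formula at `s = 1/12` gives
`Γ(1/12) Γ(5/12) Γ(3/4) = 2π 3^(1/4) Γ(1/4)`; the triplication formula itself is proved like
Mathlib's duplication formula, by the Bohr–Mollerup characterisation of `Γ`.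
-/

open scoped BigOperators
open Real

/-- The ascending Pochhammer factorial `(a)_n = a (a+1) ⋯ (a+n-1)`. -/
noncomputable def poch (a : ℝ) (n : ℕ) : ℝ := ∏ i ∈ Finset.range n, (a + i)

open MeasureTheory
open scoped Interval

lemma poch_succ (a : ℝ) (n : ℕ) : poch a (n + 1) = poch a n * (a + n) :=
  Finset.prod_range_succ _ n

lemma poch_eq_ascPochhammer_eval (a : ℝ) (n : ℕ) : poch a n = (ascPochhammer ℝ n).eval a := by
  induction n with
  | zero => simp [poch]
  | succ n ih => rw [poch_succ, ih, ascPochhammer_succ_eval]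

lemma poch_nonneg {a : ℝ} (ha : 0 ≤ a) (n : ℕ) : 0 ≤ poch a n :=
  Finset.prod_nonneg fun _ _ => by positivity

lemma poch_pos {a : ℝ} (ha : 0 < a) (n : ℕ) : 0 < poch a n :=
  Finset.prod_pos fun _ _ => by positivity

lemma Gamma_add_nat_eq_poch_mul_Gamma {a : ℝ} (ha : 0 < a) (n : ℕ) :
    Gamma (a + n) = poch a n * Gamma a := by
  induction n with
  | zero => simp [poch]
  | succ n ih =>
    rw [Nat.cast_succ, ← add_assoc, Gamma_add_one (by positivity), ih, poch_succ]
    ring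

lemma choose_add_sub_one_eq_poch_div_factorial (a : ℝ) (n : ℕ) :
    Ring.choose (a + n - 1) n = poch a n / n.factorial := by
  rw [Ring.choose_eq_smul, Polynomial.descPochhammer_smeval_eq_ascPochhammer,
    Polynomial.ascPochhammer_smeval_eq_eval, poch_eq_ascPochhammer_eval, smul_eq_mul,
    inv_mul_eq_div]
  ring_nf

theorem hasSum_poch_div_factorial_mul_pow (a : ℝ) {x : ℝ} (hx : |x| < 1) :
    HasSum (fun n => poch a n / n.factorial * x ^ n) ((1 - x) ^ (-a)) := by
  have h := (one_div_one_sub_rpow_hasFPowerSeriesOnBall_zero a).hasSum (y := x) (by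
    rwa [Metric.mem_eball, edist_zero_right, enorm_eq_nnnorm, ENNReal.coe_lt_one_iff,
      ← NNReal.coe_lt_one, coe_nnnorm])
  simp only [FormalMultilinearSeries.ofScalars_apply_eq, choose_add_sub_one_eq_poch_div_factorial,
    smul_eq_mul, zero_add, one_div] at h
  rwa [rpow_neg (by linarith [abs_lt.1 hx])]

lemma integral_rpow_mul_one_sub_rpow {p q : ℝ} (hp : 0 < p) (hq : 0 < q) :
    ∫ x in (0:ℝ)..1, x ^ (p - 1) * (1 - x) ^ (q - 1) = Gamma p * Gamma q / Gamma (p + q) := by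
  rw [← ProbabilityTheory.beta, ProbabilityTheory.beta_eq_betaIntegralReal p q hp hq,
    Complex.betaIntegral,
    ← Complex.ofReal_re (∫ x in (0:ℝ)..1, _), ← intervalIntegral.integral_ofReal]
  congr 1
  refine intervalIntegral.integral_congr fun x hx => ?_
  rw [Set.uIcc_of_le zero_le_one] at hx
  push_cast
  rw [Complex.ofReal_cpow hx.1, Complex.ofReal_cpow (sub_nonneg.2 hx.2)]
  push_cast; rfl

lemma intervalIntegrable_rpow_mul_one_sub_rpow {p q : ℝ} (hp : 0 < p) (hq : 0 < q) :
    IntervalIntegrable (fun x : ℝ => x ^ (p - 1) * (1 - x) ^ (q - 1)) volume 0 1 := by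
  refine (Complex.betaIntegral_convergent (u := p) (v := q) (by simpa) (by simpa)).norm.congr_uIoo
    fun x hx => ?_
  rw [Set.uIoo_of_le zero_le_one] at hx
  have h1 : 0 < 1 - x := sub_pos.2 hx.2
  have e1 := Complex.norm_cpow_eq_rpow_re_of_pos hx.1 (p - 1)
  have e2 := Complex.norm_cpow_eq_rpow_re_of_pos h1 (q - 1)
  push_cast at e1 e2 ⊢
  simp [e1, e2]

lemma hasSum_poch_div_factorial_mul_rpow_mul_one_sub_rpow (a b c : ℝ) {t : ℝ}
    (ht : t ∈ Set.Ioo 0 1) :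
    HasSum (fun n => poch a n / n.factorial * (t ^ (b + n - 1) * (1 - t) ^ (c - b - 1)))
      (t ^ (b - 1) * (1 - t) ^ (c - a - b - 1)) := by
  have h := (hasSum_poch_div_factorial_mul_pow a (abs_lt.2 ⟨by linarith [ht.1], ht.2⟩)).mul_right
    (t ^ (b - 1) * (1 - t) ^ (c - b - 1))
  have hsum : t ^ (b - 1) * (1 - t) ^ (c - a - b - 1)
      = (1 - t) ^ (-a) * (t ^ (b - 1) * (1 - t) ^ (c - b - 1)) := by
    rw [show c - a - b - 1 = -a + (c - b - 1) by ring, rpow_add (sub_pos.2 ht.2)]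
    ring
  refine hsum ▸ h.congr_fun fun n => ?_
  rw [add_sub_right_comm, rpow_add ht.1, rpow_natCast]
  ring

lemma integral_rpow_add_nat_mul_one_sub_rpow {b c : ℝ} (hb : 0 < b) (hbc : b < c) (n : ℕ) :
    ∫ t in (0:ℝ)..1, t ^ (b + n - 1) * (1 - t) ^ (c - b - 1)
      = Gamma b * Gamma (c - b) / Gamma c * (poch b n / poch c n) := by
  have hc : 0 < c := hb.trans hbc
  rw [integral_rpow_mul_one_sub_rpow (by positivity) (sub_pos.2 hbc),
    show b + n + (c - b) = c + n by ring, Gamma_add_nat_eq_poch_mul_Gamma hb,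
    Gamma_add_nat_eq_poch_mul_Gamma hc]
  have := poch_pos hc n
  have := Gamma_pos_of_pos hc
  field_simp

theorem hasSum_poch_mul_poch_div_poch_mul_factorial {a b c : ℝ} (ha : 0 ≤ a) (hb : 0 < b)
    (habc : a + b < c) :
    HasSum (fun n => poch a n * poch b n / (poch c n * n.factorial))
      (Gamma c * Gamma (c - a - b) / (Gamma (c - a) * Gamma (c - b))) := by
  have hbc : b < c := by linarith
  have hc : 0 < c := hb.trans hbc
  set F : ℕ → ℝ → ℝ := fun n t => poch a n / n.factorial * (t ^ (b + n - 1) * (1 - t) ^ (c - b - 1))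
  have hF_nonneg : ∀ n, ∀ t ∈ Ι (0:ℝ) 1, 0 ≤ F n t := fun n t ht => by
    rw [Set.uIoc_of_le zero_le_one] at ht
    exact mul_nonneg (div_nonneg (poch_nonneg ha n) (by positivity))
      (mul_nonneg (rpow_nonneg ht.1.le _) (rpow_nonneg (sub_nonneg.2 ht.2) _))
  have hF_hasSum : ∀ᵐ t, t ∈ Ι (0:ℝ) 1 →
      HasSum (fun n => F n t) (t ^ (b - 1) * (1 - t) ^ (c - a - b - 1)) := by
    filter_upwards [measure_eq_zero_iff_ae_notMem.1 (measure_singleton (1:ℝ))] with t ht hI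
    rw [Set.uIoc_of_le zero_le_one] at hI
    exact hasSum_poch_div_factorial_mul_rpow_mul_one_sub_rpow a b c ⟨hI.1, lt_of_le_of_ne hI.2 ht⟩
  have hF_integral : ∀ n, ∫ t in (0:ℝ)..1, F n t
      = Gamma b * Gamma (c - b) / Gamma c * (poch a n * poch b n / (poch c n * n.factorial)) :=
    fun n => by
      rw [intervalIntegral.integral_const_mul, integral_rpow_add_nat_mul_one_sub_rpow hb hbc]
      ring
  -- The nonnegative terms are their own dominating bound; their sum is the beta integrand.
  have hsum := intervalIntegral.hasSum_integral_of_dominated_convergence F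
    (fun n => (by fun_prop : Measurable (F n)).aestronglyMeasurable)
    (fun n => ae_of_all _ fun t ht => (Real.norm_of_nonneg (hF_nonneg n t ht)).le)
    (hF_hasSum.mono fun t ht hI => (ht hI).summable)
    ((intervalIntegrable_rpow_mul_one_sub_rpow hb (by linarith : 0 < c - a - b)).congr_uIoo
      fun t ht => ((hasSum_poch_div_factorial_mul_rpow_mul_one_sub_rpow a b c
        (by rwa [Set.uIoo_of_le zero_le_one] at ht)).tsum_eq).symm)
    hF_hasSum
  have hΓ : ∀ {x : ℝ}, 0 < x → Gamma x ≠ 0 := fun hx => (Gamma_pos_of_pos hx).ne'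
  have hK : Gamma b * Gamma (c - b) / Gamma c ≠ 0 :=
    div_ne_zero (mul_ne_zero (hΓ hb) (hΓ (sub_pos.2 hbc))) (hΓ hc)
  rw [integral_rpow_mul_one_sub_rpow hb (by linarith), show b + (c - a - b) = c - a by ring]
    at hsum
  simp only [hF_integral] at hsum
  have hval : Gamma b * Gamma (c - a - b) / Gamma (c - a) = Gamma b * Gamma (c - b) / Gamma c *
      (Gamma c * Gamma (c - a - b) / (Gamma (c - a) * Gamma (c - b))) := by
    have := hΓ (sub_pos.2 hbc)
    have := hΓ hc
    field_simp
  rw [hval] at hsum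
  exact (hasSum_mul_left_iff hK).1 hsum

lemma convexOn_log_Gamma_div_add {k c : ℝ} (hk : 0 < k) (hc : 0 ≤ c) :
    ConvexOn ℝ (Set.Ioi 0) fun s => log (Gamma (s / k + c)) := by
  let A : ℝ →ᵃ[ℝ] ℝ := (LinearMap.lsmul ℝ ℝ k⁻¹).toAffineMap + AffineMap.const ℝ ℝ c
  have hA : ∀ s, A s = s / k + c := fun s => by simp [A, div_eq_inv_mul]
  refine ((convexOn_log_Gamma.comp_affineMap A).subset (fun s hs => ?_) (convex_Ioi 0)).congr
    fun s _ => by simp [hA]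
  simp only [Set.mem_preimage, hA, Set.mem_Ioi] at hs ⊢
  positivity

noncomputable def triplingGamma (s : ℝ) : ℝ :=
  Gamma (s / 3) * Gamma (s / 3 + 1 / 3) * Gamma (s / 3 + 2 / 3) * 3 ^ (s - 1 / 2) / (2 * π)

lemma triplingGamma_add_one {s : ℝ} (hs : s ≠ 0) :
    triplingGamma (s + 1) = s * triplingGamma s := by
  rw [triplingGamma, triplingGamma, add_div, add_assoc,
    show s / 3 + (1 / 3 + 1 / 3) = s / 3 + 2 / 3 by ring,
    show s / 3 + 1 / 3 + 2 / 3 = s / 3 + 1 by ring, Gamma_add_one (by positivity),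
    show s + 1 - 1 / 2 = s - 1 / 2 + 1 by ring, rpow_add_one three_ne_zero]
  ring

lemma triplingGamma_one : triplingGamma 1 = 1 := by
  have h := Gamma_mul_Gamma_one_sub (1 / 3)
  rw [show π * (1 / 3) = π / 3 by ring, sin_pi_div_three,
    show (1:ℝ) - 1 / 3 = 2 / 3 by norm_num] at h
  rw [triplingGamma, show (1:ℝ) / 3 + 1 / 3 = 2 / 3 by norm_num,
    show (1:ℝ) / 3 + 2 / 3 = 1 by norm_num, Gamma_one, mul_one, h,
    show (1:ℝ) - 1 / 2 = 1 / 2 by norm_num, ← sqrt_eq_rpow]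
  have := pi_pos
  have : 0 < √3 := by positivity
  field_simp

lemma log_triplingGamma {s : ℝ} (hs : 0 < s) :
    log (triplingGamma s) = log (Gamma (s / 3)) + log (Gamma (s / 3 + 1 / 3))
      + log (Gamma (s / 3 + 2 / 3)) + (s - 1 / 2) * log 3 + -log (2 * π) := by
  have hΓ : ∀ x : ℝ, 0 < x → Gamma x ≠ 0 := fun x hx => (Gamma_pos_of_pos hx).ne'
  have h1 := hΓ (s / 3) (by positivity)
  have h2 := hΓ (s / 3 + 1 / 3) (by positivity)
  have h3 := hΓ (s / 3 + 2 / 3) (by positivity)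
  rw [triplingGamma, log_div (by positivity) (by positivity),
    log_mul (by positivity) (by positivity),
    log_mul (by positivity) h3, log_mul h1 h2, log_rpow three_pos, sub_eq_add_neg]

lemma convexOn_log_triplingGamma : ConvexOn ℝ (Set.Ioi 0) (log ∘ triplingGamma) := by
  have h3 : ConvexOn ℝ (Set.Ioi (0:ℝ)) fun s => (s - 1 / 2) * log 3 :=
    ⟨convex_Ioi 0, fun x _ y _ a b _ _ hab => le_of_eq (by
      simp only [smul_eq_mul]; linear_combination (log 3 / 2) * hab)⟩
  refine (((((convexOn_log_Gamma_div_add three_pos le_rfl).add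
    (convexOn_log_Gamma_div_add three_pos (by norm_num : (0:ℝ) ≤ 1 / 3))).add
    (convexOn_log_Gamma_div_add three_pos (by norm_num : (0:ℝ) ≤ 2 / 3))).add h3).add_const
    (-log (2 * π))).congr fun s hs => ?_
  simp [log_triplingGamma hs]

lemma triplingGamma_pos {s : ℝ} (hs : 0 < s) : 0 < triplingGamma s := by
  have := Gamma_pos_of_pos (by positivity : 0 < s / 3)
  have := Gamma_pos_of_pos (by positivity : 0 < s / 3 + 1 / 3)
  have := Gamma_pos_of_pos (by positivity : 0 < s / 3 + 2 / 3)
  have := pi_pos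
  unfold triplingGamma
  positivity

lemma triplingGamma_eq_Gamma {s : ℝ} (hs : 0 < s) : triplingGamma s = Gamma s :=
  eq_Gamma_of_log_convex convexOn_log_triplingGamma (fun {_} hy => triplingGamma_add_one hy.ne')
    (fun {_} hy => triplingGamma_pos hy) triplingGamma_one hs

theorem Gamma_mul_Gamma_add_third_mul_Gamma_add_two_thirds {s : ℝ} (hs : 0 < s) :
    Gamma s * Gamma (s + 1 / 3) * Gamma (s + 2 / 3)
      = 2 * π * 3 ^ (1 / 2 - 3 * s) * Gamma (3 * s) := by
  rw [← triplingGamma_eq_Gamma (s := 3 * s) (by positivity), triplingGamma,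
    mul_div_cancel_left₀ _ three_ne_zero, show 1 / 2 - 3 * s = -(3 * s - 1 / 2) by ring,
    rpow_neg zero_le_three]
  have := pi_pos
  have : 0 < (3:ℝ) ^ (3 * s - 1 / 2) := by positivity
  field_simp

lemma sin_pi_div_twelve_mul_sin_five_pi_div_twelve : sin (π / 12) * sin (5 * π / 12) = 1 / 4 := by
  have h := sin_two_mul (π / 12)
  rw [show 2 * (π / 12) = π / 6 by ring, sin_pi_div_six] at h
  rw [show 5 * π / 12 = π / 2 - π / 12 by ring, sin_pi_div_two_sub]
  linarith

lemma Gamma_eleven_div_twelve_mul_Gamma_seven_div_twelve :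
    Gamma (11 / 12) * Gamma (7 / 12)
      = 2 * π * Gamma (3 / 4) / (3 ^ (1 / 4 : ℝ) * Gamma (1 / 4)) := by
  have hreflect :
      Gamma (1 / 12) * Gamma (5 / 12) * (Gamma (11 / 12) * Gamma (7 / 12)) = 4 * π ^ 2 := by
    have h1 := Gamma_mul_Gamma_one_sub (1 / 12)
    have h5 := Gamma_mul_Gamma_one_sub (5 / 12)
    rw [show π * (1 / 12) = π / 12 by ring, show (1 : ℝ) - 1 / 12 = 11 / 12 by norm_num] at h1
    rw [show π * (5 / 12) = 5 * π / 12 by ring, show (1 : ℝ) - 5 / 12 = 7 / 12 by norm_num] at h5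
    calc Gamma (1 / 12) * Gamma (5 / 12) * (Gamma (11 / 12) * Gamma (7 / 12))
        = π / sin (π / 12) * (π / sin (5 * π / 12)) := by rw [← h1, ← h5]; ring
      _ = 4 * π ^ 2 := by
        rw [div_mul_div_comm, sin_pi_div_twelve_mul_sin_five_pi_div_twelve]; ring
  have htriple := Gamma_mul_Gamma_add_third_mul_Gamma_add_two_thirds (s := 1 / 12) (by norm_num)
  norm_num at htriple
  have hG : 0 < Gamma (1 / 12) * Gamma (5 / 12) :=
    mul_pos (Gamma_pos_of_pos (by norm_num)) (Gamma_pos_of_pos (by norm_num))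
  rw [eq_div_iff (by have := Gamma_pos_of_pos (by norm_num : (0 : ℝ) < 1 / 4); positivity)]
  refine mul_left_cancel₀ hG.ne' ?_
  linear_combination (3 ^ (1 / 4 : ℝ) * Gamma (1 / 4)) * hreflect - 2 * π * htriple

theorem stmt12 :
    Summable (fun n : ℕ => poch (1 / 12) n * poch (5 / 12) n / (poch 1 n * (n.factorial : ℝ))) ∧
    ∑' n : ℕ, poch (1 / 12) n * poch (5 / 12) n / (poch 1 n * (n.factorial : ℝ))
      = (3 : ℝ) ^ ((1 : ℝ) / 4) * Real.Gamma (1 / 4) /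
          (2 * Real.sqrt Real.pi * Real.Gamma (3 / 4)) ∧
    ∑' n : ℕ, poch (1 / 12) n * poch (5 / 12) n / (poch 1 n * (n.factorial : ℝ))
      = (3 : ℝ) ^ ((1 : ℝ) / 4) / 2 *
          ((Real.sqrt Real.pi * Real.Gamma (1 / 4) / Real.Gamma (3 / 4)) / Real.pi) := by
  have hsum := hasSum_poch_mul_poch_div_poch_mul_factorial (a := 1 / 12) (b := 5 / 12) (c := 1)
    (by norm_num) (by norm_num) (by norm_num)
  norm_num [Gamma_one_half_eq, Gamma_eleven_div_twelve_mul_Gamma_seven_div_twelve] at hsum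
  have h14 := Gamma_pos_of_pos (by norm_num : (0 : ℝ) < 1 / 4)
  have h34 := Gamma_pos_of_pos (by norm_num : (0 : ℝ) < 3 / 4)
  have hsqrt : 0 < √π := sqrt_pos.2 pi_pos
  refine ⟨hsum.summable, ?_, ?_⟩ <;> rw [hsum.tsum_eq]
  · field_simp
    exact sq_sqrt pi_pos.le
  · field_simp
end

section
/- The Gamma function satisfies (Γ(17/24)Γ(23/24)/(Γ(13/24)Γ(19/24)))² = 4^{-2/3} · (3 + 2√2) · Γ(5/6)/Γ(1/6). -/
set_option maxHeartbeats 1000000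


open scoped BigOperators
open Real

theorem stmt13 :
    (Real.Gamma (17 / 24) * Real.Gamma (23 / 24) /
        (Real.Gamma (13 / 24) * Real.Gamma (19 / 24))) ^ 2
      = (4 : ℝ) ^ (-(2 : ℝ) / 3) * (3 + 2 * Real.sqrt 2) *
          (Real.Gamma (5 / 6) / Real.Gamma (1 / 6)) := by
  -- notation
  set a := Real.Gamma (1/24) with ha'
  set b := Real.Gamma (5/24) with hb'
  set c := Real.Gamma (7/24) with hc'
  set d := Real.Gamma (11/24) with hd'
  set e := Real.Gamma (13/24) with he'
  set f := Real.Gamma (17/24) with hf'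
  set g := Real.Gamma (19/24) with hg'
  set h := Real.Gamma (23/24) with hh'
  set p := Real.Gamma (1/12) with hp'
  set q := Real.Gamma (5/12) with hq'
  set r := Real.Gamma (7/12) with hr'
  set s := Real.Gamma (11/12) with hs'
  set u := Real.Gamma (1/6) with hu'
  set v := Real.Gamma (5/6) with hv'
  -- positivity
  have hpos : ∀ x : ℝ, 0 < x → 0 < Real.Gamma x := fun x hx => Real.Gamma_pos_of_pos hx
  have hapos : 0 < a := hpos _ (by norm_num)
  have hbpos : 0 < b := hpos _ (by norm_num)
  have hcpos : 0 < c := hpos _ (by norm_num)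
  have hdpos : 0 < d := hpos _ (by norm_num)
  have hepos : 0 < e := hpos _ (by norm_num)
  have hgpos : 0 < g := hpos _ (by norm_num)
  have hupos : 0 < u := hpos _ (by norm_num)
  -- sines
  set s1 := Real.sin (π * (1/24)) with hs1'
  set s5 := Real.sin (π * (5/24)) with hs5'
  set s7 := Real.sin (π * (7/24)) with hs7'
  set s11 := Real.sin (π * (11/24)) with hs11'
  have hsinpos : ∀ x : ℝ, 0 < x → x < 1 → 0 < Real.sin (π * x) := by
    intro x hx hx1
    apply Real.sin_pos_of_pos_of_lt_pi
    · positivity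
    · nlinarith [Real.pi_pos]
  have hs1pos : 0 < s1 := hsinpos _ (by norm_num) (by norm_num)
  have hs5pos : 0 < s5 := hsinpos _ (by norm_num) (by norm_num)
  have hs7pos : 0 < s7 := hsinpos _ (by norm_num) (by norm_num)
  have hs11pos : 0 < s11 := hsinpos _ (by norm_num) (by norm_num)
  -- duplication formula instances
  have hae := Real.Gamma_mul_Gamma_add_half (1/24 : ℝ)
  have hbf := Real.Gamma_mul_Gamma_add_half (5/24 : ℝ)
  have hcg := Real.Gamma_mul_Gamma_add_half (7/24 : ℝ)
  have hdh := Real.Gamma_mul_Gamma_add_half (11/24 : ℝ)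
  have hpr := Real.Gamma_mul_Gamma_add_half (1/12 : ℝ)
  have hqs := Real.Gamma_mul_Gamma_add_half (5/12 : ℝ)
  norm_num at hae hbf hcg hdh hpr hqs
  rw [← ha', ← hb', ← hc', ← hd', ← he', ← hf', ← hg', ← hh', ← hp', ← hq',
    ← hr', ← hs', ← hu', ← hv'] at *
  -- reflection formula instances
  have hah := Real.Gamma_mul_Gamma_one_sub (1/24 : ℝ)
  have hbg := Real.Gamma_mul_Gamma_one_sub (5/24 : ℝ)
  have hcf := Real.Gamma_mul_Gamma_one_sub (7/24 : ℝ)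
  have hde := Real.Gamma_mul_Gamma_one_sub (11/24 : ℝ)
  norm_num at hah hbg hcf hde
  rw [← ha', ← hb', ← hc', ← hd', ← he', ← hf', ← hg', ← hh',
    ← hs1', ← hs5', ← hs7', ← hs11'] at *
  have hah1 : a * h * s1 = π := by rw [hah]; field_simp
  have hbg1 : b * g * s5 = π := by rw [hbg]; field_simp
  have hcf1 : c * f * s7 = π := by rw [hcf]; field_simp
  have hde1 : d * e * s11 = π := by rw [hde]; field_simp
  -- sine identity
  have sinmul : ∀ x y : ℝ, Real.sin x * Real.sin y
      = (Real.cos (x - y) - Real.cos (x + y)) / 2 := by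
    intro x y; rw [Real.cos_sub, Real.cos_add]; ring
  have hsqrt2 : Real.sqrt 2 ^ 2 = 2 := Real.sq_sqrt (by norm_num)
  have hsin : s5 * s11 = (3 + 2 * Real.sqrt 2) * (s1 * s7) := by
    rw [hs5', hs11', hs1', hs7', sinmul, sinmul,
      show π * (5/24) - π * (11/24) = -(π/4) by ring,
      show π * (5/24) + π * (11/24) = π - π/3 by ring,
      show π * (1/24) - π * (7/24) = -(π/4) by ring,
      show π * (1/24) + π * (7/24) = π/3 by ring,
      Real.cos_neg, Real.cos_pi_sub, Real.cos_pi_div_four, Real.cos_pi_div_three]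
    linear_combination (-1/2 : ℝ) * hsqrt2
  -- rpow arithmetic helpers
  have h2 : ∀ x y : ℝ, (2:ℝ) ^ x * 2 ^ y = 2 ^ (x + y) := fun x y =>
    (Real.rpow_add two_pos x y).symm
  have hsp : Real.sqrt π * Real.sqrt π = π := Real.mul_self_sqrt Real.pi_pos.le
  -- the two main product identities
  have hN : (a*b*c*d) * (f*h)^2 * (s1*s7) = (2:ℝ)^((2:ℝ)/3) * π^3 * (q*s) := by
    calc (a*b*c*d) * (f*h)^2 * (s1*s7)
        = (b*f) * (d*h) * ((c*f*s7) * (a*h*s1)) := by ring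
      _ = (q * 2^((7:ℝ)/12) * √π) * (s * 2^((1:ℝ)/12) * √π) * (π * π) := by
          rw [hbf, hdh, hcf1, hah1]
      _ = ((2:ℝ)^((7:ℝ)/12) * 2^((1:ℝ)/12)) * (√π * √π) * π^2 * (q*s) := by ring
      _ = (2:ℝ)^((2:ℝ)/3) * π^3 * (q*s) := by
          rw [h2, hsp, show (7:ℝ)/12 + 1/12 = 2/3 by norm_num]; ring
  have hD : (a*b*c*d) * (e*g)^2 * (s5*s11) = (2:ℝ)^((4:ℝ)/3) * π^3 * (p*r) := by
    calc (a*b*c*d) * (e*g)^2 * (s5*s11)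
        = (a*e) * (c*g) * ((b*g*s5) * (d*e*s11)) := by ring
      _ = (p * 2^((11:ℝ)/12) * √π) * (r * 2^((5:ℝ)/12) * √π) * (π * π) := by
          rw [hae, hcg, hbg1, hde1]
      _ = ((2:ℝ)^((11:ℝ)/12) * 2^((5:ℝ)/12)) * (√π * √π) * π^2 * (p*r) := by ring
      _ = (2:ℝ)^((4:ℝ)/3) * π^3 * (p*r) := by
          rw [h2, hsp, show (11:ℝ)/12 + 5/12 = 4/3 by norm_num]; ring
  -- rewrite 4^(-2/3) as 2^(-4/3)
  have h4 : (4:ℝ) ^ (-(2:ℝ)/3) = (2:ℝ) ^ (-(4:ℝ)/3) := by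
    rw [show (4:ℝ) = (2:ℝ) ^ ((2:ℕ):ℝ) by rw [Real.rpow_natCast]; norm_num,
      ← Real.rpow_mul (by norm_num : (0:ℝ) ≤ 2)]
    norm_num
  rw [h4, div_pow, div_eq_iff (by positivity : ((e*g)^2 : ℝ) ≠ 0)]
  -- cancel a common positive factor
  set X := u * (a*b*c*d) * (s1*s7) * (2:ℝ)^((4:ℝ)/3) with hX'
  have hXne : X ≠ 0 := by
    have : (0:ℝ) < (2:ℝ)^((4:ℝ)/3) := Real.rpow_pos_of_pos two_pos _
    positivity
  apply mul_right_cancel₀ hXne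
  have hL : (f*h)^2 * X = (2:ℝ)^((13:ℝ)/6) * π^3 * √π * (u*v) := by
    calc (f*h)^2 * X
        = ((a*b*c*d) * (f*h)^2 * (s1*s7)) * u * (2:ℝ)^((4:ℝ)/3) := by rw [hX']; ring
      _ = ((2:ℝ)^((2:ℝ)/3) * π^3 * (v * 2^((1:ℝ)/6) * √π)) * u * (2:ℝ)^((4:ℝ)/3) := by
          rw [hN, hqs]
      _ = ((2:ℝ)^((2:ℝ)/3) * 2^((1:ℝ)/6) * 2^((4:ℝ)/3)) * π^3 * √π * (u*v) := by ring
      _ = (2:ℝ)^((13:ℝ)/6) * π^3 * √π * (u*v) := by rw [h2, h2]; norm_num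
  rw [hL]; symm
  calc (2:ℝ)^(-(4:ℝ)/3) * (3 + 2 * Real.sqrt 2) * (v/u) * (e*g)^2 * X
      = ((2:ℝ)^(-(4:ℝ)/3) * 2^((4:ℝ)/3)) * ((v/u) * u) *
          ((3 + 2 * Real.sqrt 2) * (s1*s7)) * ((a*b*c*d) * (e*g)^2) := by
        rw [hX']; ring
    _ = 1 * v * (s5*s11) * ((a*b*c*d) * (e*g)^2) := by
        rw [h2, hsin, div_mul_cancel₀ _ (ne_of_gt hupos)]; norm_num
    _ = ((a*b*c*d) * (e*g)^2 * (s5*s11)) * v := by ring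
    _ = ((2:ℝ)^((4:ℝ)/3) * π^3 * (u * 2^((5:ℝ)/6) * √π)) * v := by rw [hD, hpr]
    _ = ((2:ℝ)^((4:ℝ)/3) * 2^((5:ℝ)/6)) * π^3 * √π * (u*v) := by ring
    _ = (2:ℝ)^((13:ℝ)/6) * π^3 * √π * (u*v) := by rw [h2]; norm_num
end

section
/- The Gamma function satisfies Γ(5/6)Γ(17/24)Γ(23/24)/(Γ(7/6)Γ(13/24)Γ(19/24)) = 6 · 2^{-7/6} · (√2 + 1) · Γ(2/3)³/Γ(1/3)³. -/
/-!
Write `A = Γ(17/24) Γ(23/24)` and `B = Γ(13/24) Γ(19/24)`. The multiplication formula for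
`n = 4` (three uses of Legendre duplication) evaluates `Γ(5/24) Γ(11/24) · A` and
`Γ(1/24) Γ(7/24) · B`, while two uses of reflection evaluate `Γ(1/24) Γ(7/24) · A` and
`Γ(5/24) Γ(11/24) · B` through `sin(π/24) sin(7π/24) = (√2 - 1)/4` and
`sin(5π/24) sin(11π/24) = (√2 + 1)/4`. The four products determine `(A/B)²`, and `A/B > 0`.
Duplication at `1/6` and `1/3` then trades `Γ(5/6)/Γ(1/6)` for `(Γ(2/3)/Γ(1/3))²`.
-/

open Real

theorem Real.Gamma_mul_Gamma_add_quarter_mul_Gamma_add_half_mul_Gamma_add_three_quarters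
    (z : ℝ) :
    Gamma z * Gamma (z + 1 / 4) * Gamma (z + 1 / 2) * Gamma (z + 3 / 4) =
      Gamma (4 * z) * (2 : ℝ) ^ (5 / 2 - 8 * z) * √π ^ 3 := by
  have h₁ := Gamma_mul_Gamma_add_half z
  have h₂ := Gamma_mul_Gamma_add_half (z + 1 / 4)
  have h₃ := Gamma_mul_Gamma_add_half (2 * z)
  rw [show z + 1 / 4 + 1 / 2 = z + 3 / 4 by ring, show 2 * (z + 1 / 4) = 2 * z + 1 / 2 by ring]
    at h₂
  rw [show 2 * (2 * z) = 4 * z by ring] at h₃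
  have hpow : (2 : ℝ) ^ (5 / 2 - 8 * z) =
      (2 : ℝ) ^ (1 - 2 * z) * (2 : ℝ) ^ (1 - (2 * z + 1 / 2)) * (2 : ℝ) ^ (1 - 4 * z) := by
    rw [← rpow_add two_pos, ← rpow_add two_pos]; ring_nf
  rw [hpow]
  linear_combination (Gamma (z + 1 / 4) * Gamma (z + 3 / 4)) * h₁
    + (Gamma (2 * z) * (2 : ℝ) ^ (1 - 2 * z) * √π) * h₂
    + ((2 : ℝ) ^ (1 - 2 * z) * (2 : ℝ) ^ (1 - (2 * z + 1 / 2)) * √π ^ 2) * h₃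

theorem Real.Gamma_mul_Gamma_mul_Gamma_one_sub_mul_Gamma_one_sub (a b : ℝ) :
    Gamma a * Gamma b * Gamma (1 - a) * Gamma (1 - b) = π ^ 2 / (sin (π * a) * sin (π * b)) := by
  rw [mul_right_comm _ (Gamma b), mul_assoc, Gamma_mul_Gamma_one_sub, Gamma_mul_Gamma_one_sub,
    div_mul_div_comm, sq]

theorem sin_pi_mul_one_div_24_mul_sin_pi_mul_seven_div_24 :
    sin (π * (1 / 24)) * sin (π * (7 / 24)) = (√2 - 1) / 4 := by
  have h := two_mul_sin_mul_sin (π * (1 / 24)) (π * (7 / 24))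
  rw [show π * (1 / 24) - π * (7 / 24) = -(π / 4) by ring,
    show π * (1 / 24) + π * (7 / 24) = π / 3 by ring, cos_neg, cos_pi_div_four,
    cos_pi_div_three] at h
  linarith

theorem sin_pi_mul_five_div_24_mul_sin_pi_mul_eleven_div_24 :
    sin (π * (5 / 24)) * sin (π * (11 / 24)) = (√2 + 1) / 4 := by
  have h := two_mul_sin_mul_sin (π * (5 / 24)) (π * (11 / 24))
  rw [show π * (5 / 24) - π * (11 / 24) = -(π / 4) by ring,
    show π * (5 / 24) + π * (11 / 24) = π - π / 3 by ring, cos_neg, cos_pi_sub, cos_pi_div_four,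
    cos_pi_div_three] at h
  linarith

theorem Gamma_five_sixths_div_Gamma_one_sixth :
    Gamma (5 / 6) / Gamma (1 / 6) =
      (2 : ℝ) ^ (-(1 / 3) : ℝ) * (Gamma (2 / 3) / Gamma (1 / 3)) ^ 2 := by
  have h₁ := Gamma_mul_Gamma_add_half (1 / 3)
  have h₂ := Gamma_mul_Gamma_add_half (1 / 6)
  norm_num at h₁ h₂
  calc Gamma (5 / 6) / Gamma (1 / 6)
      = Gamma (1 / 3) * Gamma (5 / 6) * Gamma (2 / 3) /
          (Gamma (1 / 6) * Gamma (2 / 3) * Gamma (1 / 3)) := by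
        field_simp
    _ = Gamma (2 / 3) * 2 ^ (1 / 3 : ℝ) * √π * Gamma (2 / 3) /
          (Gamma (1 / 3) * 2 ^ (2 / 3 : ℝ) * √π * Gamma (1 / 3)) := by
        rw [h₁, h₂]
    _ = (2 : ℝ) ^ (1 / 3 : ℝ) / 2 ^ (2 / 3 : ℝ) * (Gamma (2 / 3) / Gamma (1 / 3)) ^ 2 := by
        field_simp
    _ = _ := by rw [← rpow_sub two_pos]; norm_num

noncomputable def twentyFourthsRatio : ℝ :=
  Gamma (17 / 24) * Gamma (23 / 24) / (Gamma (13 / 24) * Gamma (19 / 24))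

theorem twentyFourthsRatio_sq :
    twentyFourthsRatio ^ 2 =
      (2 : ℝ) ^ (-(4 / 3) : ℝ) * (√2 + 1) ^ 2 * (Gamma (5 / 6) / Gamma (1 / 6)) := by
  have hmul₅ :=
    Gamma_mul_Gamma_add_quarter_mul_Gamma_add_half_mul_Gamma_add_three_quarters (5 / 24)
  have hmul₁ :=
    Gamma_mul_Gamma_add_quarter_mul_Gamma_add_half_mul_Gamma_add_three_quarters (1 / 24)
  have hrefl₁ := Gamma_mul_Gamma_mul_Gamma_one_sub_mul_Gamma_one_sub (1 / 24) (7 / 24)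
  have hrefl₅ := Gamma_mul_Gamma_mul_Gamma_one_sub_mul_Gamma_one_sub (5 / 24) (11 / 24)
  rw [sin_pi_mul_one_div_24_mul_sin_pi_mul_seven_div_24] at hrefl₁
  rw [sin_pi_mul_five_div_24_mul_sin_pi_mul_eleven_div_24] at hrefl₅
  norm_num at hmul₅ hmul₁ hrefl₁ hrefl₅
  have hsqrt₂ : √2 - 1 ≠ 0 := sub_ne_zero.2 one_lt_sqrt_two.ne'
  calc twentyFourthsRatio ^ 2
      = Gamma (5 / 24) * Gamma (11 / 24) * Gamma (17 / 24) * Gamma (23 / 24)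
          * (Gamma (1 / 24) * Gamma (7 / 24) * Gamma (23 / 24) * Gamma (17 / 24))
          / (Gamma (5 / 24) * Gamma (11 / 24) * Gamma (19 / 24) * Gamma (13 / 24)
            * (Gamma (1 / 24) * Gamma (7 / 24) * Gamma (13 / 24) * Gamma (19 / 24))) := by
        rw [twentyFourthsRatio]
        field_simp
    _ = Gamma (5 / 6) * 2 ^ (5 / 6 : ℝ) * √π ^ 3 * (π ^ 2 / ((√2 - 1) / 4))
          / (π ^ 2 / ((√2 + 1) / 4) * (Gamma (1 / 6) * 2 ^ (13 / 6 : ℝ) * √π ^ 3)) := by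
        rw [hmul₅, hrefl₁, hrefl₅, hmul₁]
    _ = 2 ^ (5 / 6 : ℝ) / 2 ^ (13 / 6 : ℝ) * ((√2 + 1) / (√2 - 1)) *
          (Gamma (5 / 6) / Gamma (1 / 6)) := by
        field_simp
    _ = _ := by
        have hsilver : (√2 + 1) / (√2 - 1) = (√2 + 1) ^ 2 := by
          rw [div_eq_iff hsqrt₂]; nlinarith [sq_sqrt (zero_le_two : (0 : ℝ) ≤ 2)]
        rw [← rpow_sub two_pos, hsilver]
        norm_num

theorem twentyFourthsRatio_eq :
    twentyFourthsRatio =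
      (2 : ℝ) ^ (-(5 / 6) : ℝ) * (√2 + 1) * (Gamma (2 / 3) / Gamma (1 / 3)) := by
  have hratio : 0 ≤ twentyFourthsRatio := by unfold twentyFourthsRatio; positivity
  refine (pow_left_inj₀ hratio (by positivity) two_ne_zero).1 ?_
  have hpow : (2 : ℝ) ^ (-(4 / 3) : ℝ) * 2 ^ (-(1 / 3) : ℝ) = (2 ^ (-(5 / 6) : ℝ)) ^ 2 := by
    rw [← rpow_add two_pos, ← rpow_natCast, ← rpow_mul zero_le_two]
    norm_num
  rw [twentyFourthsRatio_sq, Gamma_five_sixths_div_Gamma_one_sixth]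
  linear_combination (√2 + 1) ^ 2 * (Gamma (2 / 3) / Gamma (1 / 3)) ^ 2 * hpow

theorem stmt15 :
    Real.Gamma (5 / 6) * Real.Gamma (17 / 24) * Real.Gamma (23 / 24) /
        (Real.Gamma (7 / 6) * Real.Gamma (13 / 24) * Real.Gamma (19 / 24))
      = 6 * (2 : ℝ) ^ (-(7 : ℝ) / 6) * (Real.sqrt 2 + 1) *
          (Real.Gamma (2 / 3) ^ 3 / Real.Gamma (1 / 3) ^ 3) := by
  have hΓ₇₆ : Gamma (7 / 6) = Gamma (1 / 6) / 6 := by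
    rw [show (7 / 6 : ℝ) = 1 / 6 + 1 by norm_num, Gamma_add_one (by norm_num)]; ring
  have hpow : (2 : ℝ) ^ (-(7 : ℝ) / 6) = 2 ^ (-(1 / 3) : ℝ) * 2 ^ (-(5 / 6) : ℝ) := by
    rw [← rpow_add two_pos]; norm_num
  calc Gamma (5 / 6) * Gamma (17 / 24) * Gamma (23 / 24) /
        (Gamma (7 / 6) * Gamma (13 / 24) * Gamma (19 / 24))
      = 6 * (Gamma (5 / 6) / Gamma (1 / 6)) * twentyFourthsRatio := by
        rw [hΓ₇₆, twentyFourthsRatio]; field_simp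
    _ = _ := by
        rw [Gamma_five_sixths_div_Gamma_one_sixth, twentyFourthsRatio_eq, hpow]; ring
end

section
/- For every real x with |x| < 1, (∑_{n=0}^∞ ((1/24)_n (5/24)_n)/((3/4)_n n!) x^n) · (∑_{n=0}^∞ ((7/24)_n (11/24)_n)/((5/4)_n n!) x^n) = ∑_{n=0}^∞ ((1/3)_n (1/2)_n (2/3)_n)/((3/4)_n (5/4)_n n!) x^n; that is, ₂F₁(1/24, 5/24; 3/4; x) · ₂F₁(7/24, 11/24; 5/4; x) = ₃F₂(1/3, 1/2, 2/3; 3/4, 5/4; x). -/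
open scoped BigOperators
open Real

namespace Stmt18Aux

lemma poch_zero (a : ℝ) : poch a 0 = 1 := by simp [poch]

lemma poch_succ (a : ℝ) (n : ℕ) : poch a (n + 1) = poch a n * (a + n) :=
  Finset.prod_range_succ _ _

lemma poch_pos {a : ℝ} (ha : 0 < a) (n : ℕ) : 0 < poch a n :=
  Finset.prod_pos fun i _ => by positivity

noncomputable def aa (k : ℕ) : ℝ :=
  poch (1 / 24) k * poch (5 / 24) k / (poch (3 / 4) k * (k.factorial : ℝ))

noncomputable def bb (k : ℕ) : ℝ :=
  poch (7 / 24) k * poch (11 / 24) k / (poch (5 / 4) k * (k.factorial : ℝ))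

noncomputable def cc (n : ℕ) : ℝ :=
  poch (1 / 3) n * poch (1 / 2) n * poch (2 / 3) n /
    (poch (3 / 4) n * poch (5 / 4) n * (n.factorial : ℝ))

lemma fact_pos (n : ℕ) : (0 : ℝ) < (n.factorial : ℝ) := by
  exact_mod_cast n.factorial_pos

lemma aa_pos (k : ℕ) : 0 < aa k := by
  unfold aa
  have := poch_pos (show (0:ℝ) < 1/24 by norm_num) k
  have := poch_pos (show (0:ℝ) < 5/24 by norm_num) k
  have := poch_pos (show (0:ℝ) < 3/4 by norm_num) k
  have := fact_pos k
  positivity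

lemma bb_pos (k : ℕ) : 0 < bb k := by
  unfold bb
  have := poch_pos (show (0:ℝ) < 7/24 by norm_num) k
  have := poch_pos (show (0:ℝ) < 11/24 by norm_num) k
  have := poch_pos (show (0:ℝ) < 5/4 by norm_num) k
  have := fact_pos k
  positivity

lemma aa_succ (k : ℕ) :
    aa (k + 1) = aa k * ((1/24 + k) * (5/24 + k) / ((3/4 + k) * (k + 1))) := by
  unfold aa
  have h1 := (poch_pos (show (0:ℝ) < 3/4 by norm_num) k).ne'
  have h2 := (fact_pos k).ne'
  have h3 : ((3:ℝ)/4 + k) ≠ 0 := by positivity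
  have h4 : ((k:ℝ) + 1) ≠ 0 := by positivity
  rw [poch_succ, poch_succ, poch_succ, Nat.factorial_succ]
  push_cast
  field_simp

lemma bb_succ (k : ℕ) :
    bb (k + 1) = bb k * ((7/24 + k) * (11/24 + k) / ((5/4 + k) * (k + 1))) := by
  unfold bb
  have h1 := (poch_pos (show (0:ℝ) < 5/4 by norm_num) k).ne'
  have h2 := (fact_pos k).ne'
  have h3 : ((5:ℝ)/4 + k) ≠ 0 := by positivity
  have h4 : ((k:ℝ) + 1) ≠ 0 := by positivity
  rw [poch_succ, poch_succ, poch_succ, Nat.factorial_succ]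
  push_cast
  field_simp

lemma aa_le_one (k : ℕ) : aa k ≤ 1 := by
  induction k with
  | zero => simp [aa, poch_zero]
  | succ k ih =>
    rw [aa_succ]
    have hk : (0:ℝ) ≤ (k:ℝ) := Nat.cast_nonneg k
    have hr : (1/24 + (k:ℝ)) * (5/24 + k) / ((3/4 + k) * (k + 1)) ≤ 1 := by
      rw [div_le_one (by positivity)]
      nlinarith
    have hr0 : (0:ℝ) ≤ (1/24 + (k:ℝ)) * (5/24 + k) / ((3/4 + k) * (k + 1)) := by positivity
    exact mul_le_one₀ ih hr0 hr

lemma bb_le_one (k : ℕ) : bb k ≤ 1 := by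
  induction k with
  | zero => simp [bb, poch_zero]
  | succ k ih =>
    rw [bb_succ]
    have hk : (0:ℝ) ≤ (k:ℝ) := Nat.cast_nonneg k
    have hr : (7/24 + (k:ℝ)) * (11/24 + k) / ((5/4 + k) * (k + 1)) ≤ 1 := by
      rw [div_le_one (by positivity)]
      nlinarith
    have hr0 : (0:ℝ) ≤ (7/24 + (k:ℝ)) * (11/24 + k) / ((5/4 + k) * (k + 1)) := by positivity
    exact mul_le_one₀ ih hr0 hr

/-- WZ certificate. -/
noncomputable def rr (n k : ℝ) : ℝ := k * (2*k^2 - 3*n*k - 15/4*k + 3/4*n + 13/16)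

noncomputable def A1 (n : ℝ) : ℝ := (n + 1) * (n + 3/4) * (n + 5/4)
noncomputable def A0 (n : ℝ) : ℝ := (n + 1/3) * (n + 1/2) * (n + 2/3)

/-- The per-`k` WZ identity. -/
lemma key (n k : ℕ) (hk : k ≤ n) :
    A1 n * aa k * bb (n + 1 - k) - A0 n * aa k * bb (n - k) =
      rr n (k + 1) * aa (k + 1) * bb (n - k) - rr n k * aa k * bb (n + 1 - k) := by
  obtain ⟨m, rfl⟩ := Nat.exists_eq_add_of_le hk
  have e1 : k + m + 1 - k = m + 1 := by omega
  have e2 : k + m - k = m := by omega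
  rw [e1, e2, aa_succ, bb_succ]
  have h1 : ((3:ℝ)/4 + k) ≠ 0 := by positivity
  have h2 : ((k:ℝ) + 1) ≠ 0 := by positivity
  have h3 : ((5:ℝ)/4 + m) ≠ 0 := by positivity
  have h4 : ((m:ℝ) + 1) ≠ 0 := by positivity
  unfold rr A1 A0
  push_cast
  field_simp
  ring

noncomputable def T (n : ℕ) : ℝ := ∑ k ∈ Finset.range (n + 1), aa k * bb (n - k)

lemma rr_top (n : ℕ) : rr n ((n : ℝ) + 1) = -A1 n := by
  unfold rr A1; ring

lemma T_rec (n : ℕ) : A1 n * T (n + 1) = A0 n * T n := by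
  have htel : ∑ k ∈ Finset.range (n + 1),
      ((fun k : ℕ => rr n k * aa k * bb (n + 1 - k)) (k + 1)
        - (fun k : ℕ => rr n k * aa k * bb (n + 1 - k)) k)
      = rr n (n + 1 : ℕ) * aa (n + 1) * bb (n + 1 - (n + 1))
        - rr n (0 : ℕ) * aa 0 * bb (n + 1 - 0) :=
    Finset.sum_range_sub (fun k : ℕ => rr n k * aa k * bb (n + 1 - k)) (n + 1)
  have hzero : rr n (0 : ℕ) = 0 := by unfold rr; norm_num
  have htop : rr n ((n + 1 : ℕ) : ℝ) = -A1 n := by push_cast; exact rr_top n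
  have hsum : ∑ k ∈ Finset.range (n + 1),
      (A1 n * aa k * bb (n + 1 - k) - A0 n * aa k * bb (n - k))
      = ∑ k ∈ Finset.range (n + 1),
        (rr n (k + 1 : ℕ) * aa (k + 1) * bb (n - k) - rr n k * aa k * bb (n + 1 - k)) := by
    apply Finset.sum_congr rfl
    intro k hkr
    have hk : k ≤ n := by
      have := Finset.mem_range.mp hkr; omega
    have := key n k hk
    push_cast at this ⊢
    linarith
  have heq : ∀ k ∈ Finset.range (n + 1),
      rr n (k + 1 : ℕ) * aa (k + 1) * bb (n - k) - rr n k * aa k * bb (n + 1 - k)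
      = (fun k : ℕ => rr n k * aa k * bb (n + 1 - k)) (k + 1)
        - (fun k : ℕ => rr n k * aa k * bb (n + 1 - k)) k := by
    intro k hkr
    have : n + 1 - (k + 1) = n - k := by omega
    simp only [this]
  rw [Finset.sum_congr rfl heq] at hsum
  rw [htel] at hsum
  have hT1 : T (n + 1) = (∑ k ∈ Finset.range (n + 1), aa k * bb (n + 1 - k))
      + aa (n + 1) * bb 0 := by
    unfold T
    rw [Finset.sum_range_succ]
    norm_num
  have hbb0 : bb 0 = 1 := by simp [bb, poch_zero]
  have hexp : A1 n * T (n + 1) - A0 n * T n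
      = (∑ k ∈ Finset.range (n + 1),
          (A1 n * aa k * bb (n + 1 - k) - A0 n * aa k * bb (n - k)))
        + A1 n * aa (n + 1) := by
    rw [hT1, hbb0]
    unfold T
    rw [Finset.sum_sub_distrib, mul_add, Finset.mul_sum, Finset.mul_sum]
    simp only [mul_assoc, mul_one]
    ring
  rw [hsum] at hexp
  rw [hzero] at hexp
  push_cast at hexp
  rw [rr_top n] at hexp
  have hsimp : n - n = 0 := by omega
  rw [hsimp, hbb0] at hexp
  linear_combination hexp

lemma cc_rec (n : ℕ) : A1 n * cc (n + 1) = A0 n * cc n := by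
  unfold cc A1 A0
  have p1 := (poch_pos (show (0:ℝ) < 1/3 by norm_num) n).ne'
  have p2 := (poch_pos (show (0:ℝ) < 1/2 by norm_num) n).ne'
  have p3 := (poch_pos (show (0:ℝ) < 2/3 by norm_num) n).ne'
  have p4 := (poch_pos (show (0:ℝ) < 3/4 by norm_num) n).ne'
  have p5 := (poch_pos (show (0:ℝ) < 5/4 by norm_num) n).ne'
  have p6 := (fact_pos n).ne'
  rw [poch_succ, poch_succ, poch_succ, poch_succ, poch_succ, Nat.factorial_succ]
  push_cast
  field_simp
  ring

lemma T_eq_cc (n : ℕ) : T n = cc n := by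
  induction n with
  | zero => simp [T, cc, aa, bb, poch_zero]
  | succ n ih =>
    have hA1 : A1 n ≠ 0 := by
      unfold A1
      have : (0:ℝ) ≤ (n:ℝ) := Nat.cast_nonneg n
      positivity
    have h := T_rec n
    rw [ih, ← cc_rec n] at h
    exact mul_left_cancel₀ hA1 h

end Stmt18Aux

open Stmt18Aux in
theorem stmt18 (x : ℝ) (hx : |x| < 1) :
    (∑' n : ℕ, poch (1 / 24) n * poch (5 / 24) n / (poch (3 / 4) n * (n.factorial : ℝ)) *
        (x) ^ n) *
      (∑' n : ℕ, poch (7 / 24) n * poch (11 / 24) n / (poch (5 / 4) n * (n.factorial : ℝ)) *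
        (x) ^ n)
      = ∑' n : ℕ, poch (1 / 3) n * poch (1 / 2) n * poch (2 / 3) n /
          (poch (3 / 4) n * poch (5 / 4) n * (n.factorial : ℝ)) * (x) ^ n := by
  have hgeo : Summable (fun n : ℕ => |x| ^ n) :=
    summable_geometric_of_lt_one (abs_nonneg x) hx
  have hf : Summable (fun n : ℕ => ‖aa n * x ^ n‖) := by
    apply Summable.of_nonneg_of_le (fun n => norm_nonneg _) _ hgeo
    intro n
    rw [Real.norm_eq_abs, abs_mul, abs_pow]
    have := aa_pos n
    have := aa_le_one n
    calc |aa n| * |x| ^ n = aa n * |x| ^ n := by rw [abs_of_pos (aa_pos n)]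
      _ ≤ 1 * |x| ^ n := by
          apply mul_le_mul_of_nonneg_right (aa_le_one n) (by positivity)
      _ = |x| ^ n := one_mul _
  have hg : Summable (fun n : ℕ => ‖bb n * x ^ n‖) := by
    apply Summable.of_nonneg_of_le (fun n => norm_nonneg _) _ hgeo
    intro n
    rw [Real.norm_eq_abs, abs_mul, abs_pow]
    calc |bb n| * |x| ^ n = bb n * |x| ^ n := by rw [abs_of_pos (bb_pos n)]
      _ ≤ 1 * |x| ^ n := by
          apply mul_le_mul_of_nonneg_right (bb_le_one n) (by positivity)
      _ = |x| ^ n := one_mul _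
  have hcauchy := tsum_mul_tsum_eq_tsum_sum_range_of_summable_norm hf hg
  show (∑' n : ℕ, aa n * x ^ n) * (∑' n : ℕ, bb n * x ^ n) = ∑' n : ℕ, cc n * x ^ n
  rw [hcauchy]
  apply tsum_congr
  intro n
  have hinner : ∑ k ∈ Finset.range (n + 1), aa k * x ^ k * (bb (n - k) * x ^ (n - k))
      = (∑ k ∈ Finset.range (n + 1), aa k * bb (n - k)) * x ^ n := by
    rw [Finset.sum_mul]
    apply Finset.sum_congr rfl
    intro k hkr
    have hk : k ≤ n := by have := Finset.mem_range.mp hkr; omega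
    have hpow : x ^ k * x ^ (n - k) = x ^ n := by
      rw [← pow_add]
      congr 1
      omega
    calc aa k * x ^ k * (bb (n - k) * x ^ (n - k))
        = aa k * bb (n - k) * (x ^ k * x ^ (n - k)) := by ring
      _ = aa k * bb (n - k) * x ^ n := by rw [hpow]
  rw [hinner]
  have : (∑ k ∈ Finset.range (n + 1), aa k * bb (n - k)) = cc n := T_eq_cc n
  rw [this]
end

section
/- For every real x with |x| < 1, (∑_{n=0}^∞ ((1/24)_n (7/24)_n)/((5/6)_n n!) x^n) · (∑_{n=0}^∞ ((5/24)_n (11/24)_n)/((7/6)_n n!) x^n) = ∑_{n=0}^∞ ((1/4)_n (1/2)_n (3/4)_n)/((5/6)_n (7/6)_n n!) x^n; that is, ₂F₁(1/24, 7/24; 5/6; x) · ₂F₁(5/24, 11/24; 7/6; x) = ₃F₂(1/4, 1/2, 3/4; 5/6, 7/6; x). -/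
open scoped BigOperators
open Real

namespace Stmt19Aux

lemma poch_succ (a : ℝ) (n : ℕ) : poch a (n + 1) = poch a n * (a + n) :=
  Finset.prod_range_succ _ _

lemma poch_pos {a : ℝ} (ha : 0 < a) (n : ℕ) : 0 < poch a n :=
  Finset.prod_pos fun i _ => by positivity

noncomputable def A (k : ℕ) : ℝ :=
  poch (1 / 24) k * poch (7 / 24) k / (poch (5 / 6) k * (k.factorial : ℝ))

noncomputable def B (k : ℕ) : ℝ :=
  poch (5 / 24) k * poch (11 / 24) k / (poch (7 / 6) k * (k.factorial : ℝ))

noncomputable def C (k : ℕ) : ℝ :=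
  poch (1 / 4) k * poch (1 / 2) k * poch (3 / 4) k /
    (poch (5 / 6) k * poch (7 / 6) k * (k.factorial : ℝ))

lemma A_pos (k : ℕ) : 0 < A k := by
  unfold A
  have h1 := poch_pos (by norm_num : (0:ℝ) < 1/24) k
  have h2 := poch_pos (by norm_num : (0:ℝ) < 7/24) k
  have h3 := poch_pos (by norm_num : (0:ℝ) < 5/6) k
  have h4 : (0:ℝ) < (k.factorial : ℝ) := by positivity
  positivity

lemma B_pos (k : ℕ) : 0 < B k := by
  unfold B
  have h1 := poch_pos (by norm_num : (0:ℝ) < 5/24) k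
  have h2 := poch_pos (by norm_num : (0:ℝ) < 11/24) k
  have h3 := poch_pos (by norm_num : (0:ℝ) < 7/6) k
  have h4 : (0:ℝ) < (k.factorial : ℝ) := by positivity
  positivity

lemma fact_cast_succ (k : ℕ) : ((k+1).factorial : ℝ) = (k.factorial : ℝ) * ((k:ℝ) + 1) := by
  rw [Nat.factorial_succ]; push_cast; ring

lemma A_succ (k : ℕ) : A (k + 1) =
    A k * ((1/24 + (k:ℝ)) * (7/24 + (k:ℝ)) / ((5/6 + (k:ℝ)) * ((k:ℝ) + 1))) := by
  have h1 := poch_pos (by norm_num : (0:ℝ) < 5/6) k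
  have h4 : (0:ℝ) < (k.factorial : ℝ) := by positivity
  have h5 : (0:ℝ) < 5/6 + (k:ℝ) := by positivity
  have h6 : (0:ℝ) < (k:ℝ) + 1 := by positivity
  unfold A
  rw [poch_succ, poch_succ, poch_succ, fact_cast_succ]
  field_simp

lemma B_succ (k : ℕ) : B (k + 1) =
    B k * ((5/24 + (k:ℝ)) * (11/24 + (k:ℝ)) / ((7/6 + (k:ℝ)) * ((k:ℝ) + 1))) := by
  have h1 := poch_pos (by norm_num : (0:ℝ) < 7/6) k
  have h4 : (0:ℝ) < (k.factorial : ℝ) := by positivity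
  have h5 : (0:ℝ) < 7/6 + (k:ℝ) := by positivity
  have h6 : (0:ℝ) < (k:ℝ) + 1 := by positivity
  unfold B
  rw [poch_succ, poch_succ, poch_succ, fact_cast_succ]
  field_simp

lemma C_succ (k : ℕ) : C (k + 1) =
    C k * (((k:ℝ) + 1/4) * ((k:ℝ) + 1/2) * ((k:ℝ) + 3/4) /
      (((k:ℝ) + 5/6) * ((k:ℝ) + 7/6) * ((k:ℝ) + 1))) := by
  have h1 := poch_pos (by norm_num : (0:ℝ) < 5/6) k
  have h2 := poch_pos (by norm_num : (0:ℝ) < 7/6) k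
  have h4 : (0:ℝ) < (k.factorial : ℝ) := by positivity
  have h5 : (0:ℝ) < (k:ℝ) + 5/6 := by positivity
  have h6 : (0:ℝ) < (k:ℝ) + 7/6 := by positivity
  have h7 : (0:ℝ) < (k:ℝ) + 1 := by positivity
  unfold C
  rw [poch_succ, poch_succ, poch_succ, poch_succ, poch_succ, fact_cast_succ]
  field_simp
  ring

lemma A_zero : A 0 = 1 := by simp [A, poch]
lemma B_zero : B 0 = 1 := by simp [B, poch]
lemma C_zero : C 0 = 1 := by simp [C, poch]

lemma A_le_one (k : ℕ) : A k ≤ 1 := by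
  induction k with
  | zero => rw [A_zero]
  | succ k ih =>
    rw [A_succ]
    have hq : (1/24 + (k:ℝ)) * (7/24 + (k:ℝ)) / ((5/6 + (k:ℝ)) * ((k:ℝ) + 1)) ≤ 1 := by
      rw [div_le_one (by positivity)]
      nlinarith [Nat.cast_nonneg (α := ℝ) k]
    calc A k * ((1/24 + (k:ℝ)) * (7/24 + (k:ℝ)) / ((5/6 + (k:ℝ)) * ((k:ℝ) + 1)))
        ≤ A k * 1 := by
          apply mul_le_mul_of_nonneg_left hq (A_pos k).le
      _ = A k := mul_one _
      _ ≤ 1 := ih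

lemma B_le_one (k : ℕ) : B k ≤ 1 := by
  induction k with
  | zero => rw [B_zero]
  | succ k ih =>
    rw [B_succ]
    have hq : (5/24 + (k:ℝ)) * (11/24 + (k:ℝ)) / ((7/6 + (k:ℝ)) * ((k:ℝ) + 1)) ≤ 1 := by
      rw [div_le_one (by positivity)]
      nlinarith [Nat.cast_nonneg (α := ℝ) k]
    calc B k * ((5/24 + (k:ℝ)) * (11/24 + (k:ℝ)) / ((7/6 + (k:ℝ)) * ((k:ℝ) + 1)))
        ≤ B k * 1 := by
          apply mul_le_mul_of_nonneg_left hq (B_pos k).le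
      _ = B k := mul_one _
      _ ≤ 1 := ih

/-- The WZ-certificate rational identity. -/
lemma cert (k m : ℝ) (hk : 0 ≤ k) (hm : 0 ≤ m) :
    (m + 5/24) * (m + 11/24) / ((m + 7/6) * (m + 1))
      = (k + m + 1/4) * (k + m + 1/2) * (k + m + 3/4) /
          ((k + m + 5/6) * (k + m + 7/6) * (k + m + 1))
        + (k + 1) * (k + 1 - 1/6) * (2 * (k + 1) - 3 * (k + m) - 19/6) /
            ((k + m + 5/6) * (k + m + 1) * (k + m + 7/6)) *
          ((k + 1/24) * (k + 7/24) / ((k + 5/6) * (k + 1)))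
        - k * (k - 1/6) * (2 * k - 3 * (k + m) - 19/6) /
            ((k + m + 5/6) * (k + m + 1) * (k + m + 7/6)) *
          ((m + 5/24) * (m + 11/24) / ((m + 7/6) * (m + 1))) := by
  have h1 : (0:ℝ) < m + 7/6 := by linarith
  have h2 : (0:ℝ) < m + 1 := by linarith
  have h3 : (0:ℝ) < k + m + 5/6 := by linarith
  have h4 : (0:ℝ) < k + m + 7/6 := by linarith
  have h5 : (0:ℝ) < k + m + 1 := by linarith
  have h6 : (0:ℝ) < k + 5/6 := by linarith
  have h7 : (0:ℝ) < k + 1 := by linarith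
  field_simp
  ring

/-- the certificate function -/
noncomputable def g (n k : ℕ) : ℝ :=
  (k:ℝ) * ((k:ℝ) - 1/6) * (2 * (k:ℝ) - 3 * (n:ℝ) - 19/6) /
    (((n:ℝ) + 5/6) * ((n:ℝ) + 1) * ((n:ℝ) + 7/6)) * (A k * B (n + 1 - k))

lemma g_zero (n : ℕ) : g n 0 = 0 := by simp [g]

lemma g_top (n : ℕ) : g n (n + 1) = -A (n + 1) := by
  unfold g
  have h : n + 1 - (n + 1) = 0 := by omega
  rw [h, B_zero]
  have h3 : (0:ℝ) < (n:ℝ) + 5/6 := by positivity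
  have h5 : (0:ℝ) < (n:ℝ) + 1 := by positivity
  have h4 : (0:ℝ) < (n:ℝ) + 7/6 := by positivity
  have hA := A_pos (n + 1)
  push_cast
  field_simp
  ring

/-- pointwise WZ identity, for `k ≤ n`. -/
lemma pointwise (n k : ℕ) (hkn : k ≤ n) :
    A k * B (n + 1 - k)
      = ((n:ℝ) + 1/4) * ((n:ℝ) + 1/2) * ((n:ℝ) + 3/4) /
          (((n:ℝ) + 5/6) * ((n:ℝ) + 7/6) * ((n:ℝ) + 1)) * (A k * B (n - k))
        + g n (k + 1) - g n k := by
  obtain ⟨m, rfl⟩ : ∃ m, n = k + m := ⟨n - k, by omega⟩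
  have e1 : k + m + 1 - k = m + 1 := by omega
  have e2 : k + m - k = m := by omega
  have e3 : k + m + 1 - (k + 1) = m := by omega
  unfold g
  rw [e1, e2, e3, B_succ m, A_succ k]
  have hcert := cert (k:ℝ) (m:ℝ) (Nat.cast_nonneg k) (Nat.cast_nonneg m)
  have hAB : A k * B m ≠ 0 := (mul_pos (A_pos k) (B_pos m)).ne'
  push_cast
  -- reduce to the certificate identity scaled by `A k * B m`
  have := congrArg (fun t : ℝ => t * (A k * B m)) hcert
  calc A k * (B m * ((5/24 + (m:ℝ)) * (11/24 + (m:ℝ)) / ((7/6 + (m:ℝ)) * ((m:ℝ) + 1))))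
      = (m + 5/24) * (m + 11/24) / ((m + 7/6) * (m + 1)) * (A k * B m) := by ring
    _ = _ := by rw [this]; ring

/-- The key Cauchy-product coefficient identity. -/
lemma key (n : ℕ) : ∑ k ∈ Finset.range (n + 1), A k * B (n - k) = C n := by
  induction n with
  | zero => simp [A_zero, B_zero, C_zero]
  | succ n ih =>
    have hsum : ∑ k ∈ Finset.range (n + 2), A k * B (n + 1 - k)
        = (∑ k ∈ Finset.range (n + 1), A k * B (n + 1 - k)) + A (n + 1) * B 0 := by
      rw [Finset.sum_range_succ]
      congr 1
      rw [show n + 1 - (n + 1) = 0 from by omega]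
    have hstep : ∑ k ∈ Finset.range (n + 1), A k * B (n + 1 - k)
        = ((n:ℝ) + 1/4) * ((n:ℝ) + 1/2) * ((n:ℝ) + 3/4) /
            (((n:ℝ) + 5/6) * ((n:ℝ) + 7/6) * ((n:ℝ) + 1)) *
            (∑ k ∈ Finset.range (n + 1), A k * B (n - k))
          + (g n (n + 1) - g n 0) := by
      rw [← Finset.sum_range_sub (fun k => g n k) (n + 1), Finset.mul_sum,
        ← Finset.sum_add_distrib]
      apply Finset.sum_congr rfl
      intro k hk
      rw [Finset.mem_range] at hk
      have := pointwise n k (by omega)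
      linarith [this]
    rw [hsum, hstep, ih, g_top, g_zero, B_zero, C_succ]
    ring

end Stmt19Aux

open Stmt19Aux in
theorem stmt19 (x : ℝ) (hx : |x| < 1) :
    (∑' n : ℕ, poch (1 / 24) n * poch (7 / 24) n / (poch (5 / 6) n * (n.factorial : ℝ)) *
        (x) ^ n) *
      (∑' n : ℕ, poch (5 / 24) n * poch (11 / 24) n / (poch (7 / 6) n * (n.factorial : ℝ)) *
        (x) ^ n)
      = ∑' n : ℕ, poch (1 / 4) n * poch (1 / 2) n * poch (3 / 4) n /
          (poch (5 / 6) n * poch (7 / 6) n * (n.factorial : ℝ)) * (x) ^ n := by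
  have hgeom : Summable (fun n : ℕ => |x| ^ n) :=
    summable_geometric_of_lt_one (abs_nonneg x) hx
  have hAsum : Summable (fun n : ℕ => ‖A n * x ^ n‖) := by
    apply Summable.of_nonneg_of_le (fun n => norm_nonneg _) _ hgeom
    intro n
    rw [norm_mul, norm_pow, Real.norm_eq_abs, Real.norm_eq_abs,
      abs_of_pos (A_pos n)]
    calc A n * |x| ^ n ≤ 1 * |x| ^ n := by
          apply mul_le_mul_of_nonneg_right (A_le_one n) (by positivity)
      _ = |x| ^ n := one_mul _
  have hBsum : Summable (fun n : ℕ => ‖B n * x ^ n‖) := by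
    apply Summable.of_nonneg_of_le (fun n => norm_nonneg _) _ hgeom
    intro n
    rw [norm_mul, norm_pow, Real.norm_eq_abs, Real.norm_eq_abs,
      abs_of_pos (B_pos n)]
    calc B n * |x| ^ n ≤ 1 * |x| ^ n := by
          apply mul_le_mul_of_nonneg_right (B_le_one n) (by positivity)
      _ = |x| ^ n := one_mul _
  have hcauchy := tsum_mul_tsum_eq_tsum_sum_range_of_summable_norm hAsum hBsum
  have hLHS :
      (∑' n : ℕ, poch (1 / 24) n * poch (7 / 24) n / (poch (5 / 6) n * (n.factorial : ℝ)) *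
          (x) ^ n) *
        (∑' n : ℕ, poch (5 / 24) n * poch (11 / 24) n / (poch (7 / 6) n * (n.factorial : ℝ)) *
          (x) ^ n)
        = (∑' n : ℕ, A n * x ^ n) * (∑' n : ℕ, B n * x ^ n) := rfl
  rw [hLHS, hcauchy]
  apply tsum_congr
  intro n
  have hinner : ∑ k ∈ Finset.range (n + 1), A k * x ^ k * (B (n - k) * x ^ (n - k))
      = (∑ k ∈ Finset.range (n + 1), A k * B (n - k)) * x ^ n := by
    rw [Finset.sum_mul]
    apply Finset.sum_congr rfl
    intro k hk
    rw [Finset.mem_range] at hk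
    have : x ^ k * x ^ (n - k) = x ^ n := by
      rw [← pow_add]
      congr 1
      omega
    calc A k * x ^ k * (B (n - k) * x ^ (n - k))
        = A k * B (n - k) * (x ^ k * x ^ (n - k)) := by ring
      _ = A k * B (n - k) * x ^ n := by rw [this]
  rw [hinner, key n]
  rfl
end
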